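/- Let ε > 0 and let f : ℝ → ℝ be a function satisfying |f(x + y) − f(x) − f(y)| ≤ ε for all x, y ∈ ℝ, and such that the mapping x ↦ f(cosh(x)) − sinh(x)·f(x) is locally bounded on ℝ. Then there exist a real number λ and a real derivation χ : ℝ → ℝ such that |f(x) − (χ(x) + λ·x)| ≤ ε for all x ∈ ℝ. -/

import Mathlib

open Real Set

/-- A function `φ` is locally bounded on a set `s` if every point of `s` has a
neighborhood (within `s`) on which `φ` is bounded. -/
def LocallyBoundedOn (φ : ℝ → ℝ) (s : Set ℝ) : Prop :=
  ∀ x ∈ s, ∃ C : ℝ, ∀ᶠ y in nhdsWithin x s, |φ y| ≤ C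

/-- A real-valued function is *regular* on its domain `s` if it is locally bounded,
or continuous, or Lebesgue measurable on `s`. -/
def RegularOn (φ : ℝ → ℝ) (s : Set ℝ) : Prop :=
  LocallyBoundedOn φ s ∨ ContinuousOn φ s ∨ Measurable (s.restrict φ)

/-- A real derivation: an additive function satisfying the Leibniz rule. -/
def IsRealDerivation (χ : ℝ → ℝ) : Prop :=
  (∀ x y : ℝ, χ (x + y) = χ x + χ y) ∧ (∀ x y : ℝ, χ (x * y) = x * χ y + y * χ x)

/-!
By Hyers' theorem `f` lies within `ε` of an additive `a`, and the local bound on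
`f (cosh x) - sinh x * f x` passes to `a` up to a locally bounded error. For additive `a` the
Leibniz defect `B x y = a (x y) - x a y - y a x` is bi-additive, and the duplication formulas for
`cosh` and `sinh` express `B (cosh x) (cosh x)` through the hyperbolic defect at `x` and `2x`, so
`B` is bounded on the diagonal over an interval. Polarization bounds `B` on a square, and since an
additive function bounded on an interval is linear, `B x y = -a 1 * x * y`. Hence
`χ = a - a 1 • id` is a derivation and `λ = a 1`.
-/

open Filter Topology Bornology

section Hyers

variable {G E : Type*} [AddCommMonoid G] [NormedAddCommGroup E] [NormedSpace ℝ E]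

noncomputable def hyersSeq (f : G → E) (n : ℕ) (x : G) : E := ((2 : ℝ) ^ n)⁻¹ • f (2 ^ n • x)

lemma hyersSeq_add_sub (f : G → E) (n : ℕ) (x y : G) :
    hyersSeq f n (x + y) - hyersSeq f n x - hyersSeq f n y
      = ((2 : ℝ) ^ n)⁻¹ • (f (2 ^ n • x + 2 ^ n • y) - f (2 ^ n • x) - f (2 ^ n • y)) := by
  simp only [hyersSeq, smul_add, smul_sub]

lemma hyersSeq_succ_sub (f : G → E) (n : ℕ) (x : G) :
    hyersSeq f (n + 1) x - hyersSeq f n x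
      = ((2 : ℝ) ^ (n + 1))⁻¹ • (f (2 ^ n • x + 2 ^ n • x) - f (2 ^ n • x) - f (2 ^ n • x)) := by
  rw [hyersSeq, hyersSeq, ← two_nsmul, ← mul_nsmul, ← pow_succ]
  module

variable {f : G → E} {ε : ℝ}

lemma dist_hyersSeq_succ_le (hf : ∀ x y, ‖f (x + y) - f x - f y‖ ≤ ε) (x : G) (n : ℕ) :
    dist (hyersSeq f n x) (hyersSeq f (n + 1) x) ≤ ε / 2 * (1 / 2) ^ n := by
  rw [dist_comm, dist_eq_norm, hyersSeq_succ_sub, norm_smul, norm_inv, norm_pow,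
    Real.norm_two, inv_mul_le_iff₀ (by positivity)]
  calc _ ≤ ε := hf _ _
    _ = _ := by rw [one_div, inv_pow]; field_simp; ring

lemma norm_hyersSeq_add_sub_le (hf : ∀ x y, ‖f (x + y) - f x - f y‖ ≤ ε) (x y : G) (n : ℕ) :
    ‖hyersSeq f n (x + y) - hyersSeq f n x - hyersSeq f n y‖ ≤ ε * (1 / 2) ^ n := by
  rw [hyersSeq_add_sub, norm_smul, norm_inv, norm_pow, Real.norm_two,
    inv_mul_le_iff₀ (by positivity)]
  calc _ ≤ ε := hf _ _
    _ = _ := by rw [one_div, inv_pow]; field_simp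

theorem exists_addMonoidHom_norm_sub_le [CompleteSpace E]
    (hf : ∀ x y, ‖f (x + y) - f x - f y‖ ≤ ε) :
    ∃ a : G →+ E, ∀ x, ‖f x - a x‖ ≤ ε := by
  have hlim (x : G) : ∃ L, Tendsto (hyersSeq f · x) atTop (𝓝 L) :=
    cauchySeq_tendsto_of_complete
      (cauchySeq_of_le_geometric _ _ (by norm_num) (dist_hyersSeq_succ_le hf x))
  choose a ha using hlim
  have hadd (x y : G) : a (x + y) = a x + a y := by
    have hzero : Tendsto (fun n => hyersSeq f n (x + y) - hyersSeq f n x - hyersSeq f n y)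
        atTop (𝓝 0) :=
      squeeze_zero_norm (norm_hyersSeq_add_sub_le hf x y) <| by
        simpa using (tendsto_pow_atTop_nhds_zero_of_lt_one (r := (1 / 2 : ℝ))
          (by norm_num) (by norm_num)).const_mul ε
    have := tendsto_nhds_unique (((ha (x + y)).sub (ha x)).sub (ha y)) hzero
    rwa [sub_sub, sub_eq_zero] at this
  refine ⟨AddMonoidHom.mk' a hadd, fun x => ?_⟩
  have := dist_le_of_le_geometric_of_tendsto₀ _ _ (by norm_num) (dist_hyersSeq_succ_le hf x) (ha x)
  rw [← dist_eq_norm]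
  simpa [hyersSeq] using this.trans_eq (by ring)

end Hyers

lemma AddMonoidHom.continuous_of_isBounded_of_mem_nhds {G H : Type*} [SeminormedAddCommGroup G]
    [SeminormedAddCommGroup H] [NormedSpace ℝ H] (f : G →+ H) {s : Set G} {x : G}
    (hs : s ∈ 𝓝 x) (hbounded : IsBounded (f '' s)) : Continuous f := by
  obtain ⟨C, hC⟩ := isBounded_iff_forall_norm_le.1 hbounded
  have hs₀ : (· + x) ⁻¹' s ∈ 𝓝 (0 : G) :=
    (continuous_add_const x).continuousAt.preimage_mem_nhds (by rwa [zero_add])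
  refine f.continuous_of_isBounded_nhds_zero hs₀ (isBounded_iff_forall_norm_le.2 ⟨C + ‖f x‖, ?_⟩)
  rintro _ ⟨y, hy, rfl⟩
  calc ‖f y‖ = ‖f (y + x) - f x‖ := by rw [map_add, add_sub_cancel_right]
    _ ≤ C + ‖f x‖ := (norm_sub_le _ _).trans (by gcongr; exact hC _ ⟨_, hy, rfl⟩)

lemma AddMonoidHom.apply_eq_mul_of_abs_le_on_Icc (g : ℝ →+ ℝ) {p r M : ℝ} (hpr : p < r)
    (hM : ∀ x ∈ Icc p r, |g x| ≤ M) (x : ℝ) : g x = g 1 * x := by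
  have hs : Icc p r ∈ 𝓝 ((p + r) / 2) := Icc_mem_nhds (by linarith) (by linarith)
  have hbdd : IsBounded (g '' Icc p r) := isBounded_iff_forall_norm_le.2
    ⟨M, by rintro _ ⟨y, hy, rfl⟩; exact hM y hy⟩
  simpa [mul_comm] using map_real_smul g (g.continuous_of_isBounded_of_mem_nhds hs hbdd) x 1

lemma LocallyBoundedOn.exists_bound_of_isCompact {φ : ℝ → ℝ} {s K : Set ℝ}
    (hφ : LocallyBoundedOn φ s) (hK : IsCompact K) (hKs : K ⊆ s) :
    ∃ C, ∀ x ∈ K, |φ x| ≤ C := by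
  refine hK.induction_on (p := fun t => ∃ C, ∀ x ∈ t, |φ x| ≤ C) ⟨0, by simp⟩
    (fun t u htu ⟨C, hC⟩ => ⟨C, fun x hx => hC x (htu hx)⟩)
    (fun t u ⟨C, hC⟩ ⟨D, hD⟩ => ⟨max C D, ?_⟩) (fun x hx => ?_)
  · rintro x (hx | hx)
    · exact (hC x hx).trans (le_max_left _ _)
    · exact (hD x hx).trans (le_max_right _ _)
  · obtain ⟨C, hC⟩ := hφ x (hKs hx)
    exact ⟨_, nhdsWithin_mono x hKs hC, C, fun _ hy => hy⟩

def leibnizDefect (a : ℝ →+ ℝ) : ℝ →+ ℝ →+ ℝ :=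
  AddMonoidHom.mk' (fun x => AddMonoidHom.mk' (fun y => a (x * y) - x * a y - y * a x)
    (fun y y' => by simp only [mul_add, add_mul, map_add]; ring))
    (fun x x' => by ext y; simp only [add_mul, mul_add, map_add, AddMonoidHom.mk'_apply,
      AddMonoidHom.add_apply]; ring)

namespace leibnizDefect

variable (a : ℝ →+ ℝ)

lemma apply (x y : ℝ) : leibnizDefect a x y = a (x * y) - x * a y - y * a x := rfl

lemma comm (x y : ℝ) : leibnizDefect a x y = leibnizDefect a y x := by
  simp only [apply, mul_comm x y]; ring

lemma one_left (y : ℝ) : leibnizDefect a 1 y = -(a 1 * y) := by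
  simp only [apply, one_mul]; ring

lemma two_mul_self (w : ℝ) : leibnizDefect a (2 * w) (2 * w) = 4 * leibnizDefect a w w := by
  simp only [two_mul, map_add, AddMonoidHom.add_apply]; ring

variable {a} {p r M : ℝ}

/-- Polarization through the midpoint `(u + v) / 2`. -/
lemma abs_le_of_abs_diag_le (hM : ∀ t ∈ Icc p r, |leibnizDefect a t t| ≤ M) {u v : ℝ}
    (hu : u ∈ Icc p r) (hv : v ∈ Icc p r) : |leibnizDefect a u v| ≤ 3 * M := by
  have hw : (u + v) / 2 ∈ Icc p r := ⟨by linarith [hu.1, hv.1], by linarith [hu.2, hv.2]⟩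
  have hpol : 2 * leibnizDefect a u v = 4 * leibnizDefect a ((u + v) / 2) ((u + v) / 2)
      - leibnizDefect a u u - leibnizDefect a v v := by
    rw [← two_mul_self, mul_div_cancel₀ _ two_ne_zero]
    simp only [map_add, AddMonoidHom.add_apply, comm a v u]; ring
  have := hM _ hw; have := hM u hu; have := hM v hv
  rw [abs_le] at *
  constructor <;> linarith

lemma eq_neg_mul_of_abs_diag_le (hpr : p < r) (hM : ∀ t ∈ Icc p r, |leibnizDefect a t t| ≤ M)
    (x y : ℝ) : leibnizDefect a x y = -(a 1 * x * y) := by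
  have hI (v : ℝ) (hv : v ∈ Icc p r) (x : ℝ) : leibnizDefect a x v = -(a 1 * x * v) := by
    have := ((leibnizDefect a).flip v).apply_eq_mul_of_abs_le_on_Icc hpr
      (fun u hu => abs_le_of_abs_diag_le hM hu hv) x
    rw [AddMonoidHom.flip_apply, AddMonoidHom.flip_apply, one_left] at this
    rw [this]; ring
  have := (leibnizDefect a x + AddMonoidHom.mulLeft (a 1 * x)).apply_eq_mul_of_abs_le_on_Icc hpr
    (M := 0) (fun v hv => by simp [hI v hv]) y
  simp only [AddMonoidHom.add_apply, AddMonoidHom.coe_mulLeft, comm a x 1, one_left] at this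
  linear_combination this

theorem isRealDerivation_sub (hpr : p < r) (hM : ∀ t ∈ Icc p r, |leibnizDefect a t t| ≤ M) :
    IsRealDerivation (fun x => a x - a 1 * x) := by
  refine ⟨fun x y => by simp only [map_add]; ring, fun x y => ?_⟩
  have := eq_neg_mul_of_abs_diag_le hpr hM x y
  rw [apply] at this
  linear_combination this

end leibnizDefect

noncomputable def coshDefect (φ : ℝ → ℝ) (x : ℝ) : ℝ := φ (cosh x) - sinh x * φ x

lemma abs_coshDefect_sub_le {f g : ℝ → ℝ} {ε : ℝ} (hfg : ∀ x, |f x - g x| ≤ ε) (y : ℝ) :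
    |coshDefect f y - coshDefect g y| ≤ ε * (1 + |sinh y|) := by
  calc |coshDefect f y - coshDefect g y|
      = |(f (cosh y) - g (cosh y)) - sinh y * (f y - g y)| := by
        rw [coshDefect, coshDefect]; ring_nf
    _ ≤ |f (cosh y) - g (cosh y)| + |sinh y| * |f y - g y| := by rw [← abs_mul]; exact abs_sub _ _
    _ ≤ ε + |sinh y| * ε := by gcongr <;> apply hfg
    _ = ε * (1 + |sinh y|) := by ring

lemma two_mul_leibnizDefect_cosh (a : ℝ →+ ℝ) (x : ℝ) :
    2 * leibnizDefect a (cosh x) (cosh x)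
      = coshDefect a (2 * x) - 4 * cosh x * coshDefect a x + a 1 := by
  have hcosh : cosh (2 * x) = cosh x * cosh x + cosh x * cosh x - 1 := by
    rw [cosh_two_mul, sinh_sq]; ring
  have ha : a (2 * x) = 2 * a x := by rw [two_mul, map_add, two_mul]
  rw [leibnizDefect.apply, coshDefect, coshDefect, hcosh, sinh_two_mul, ha, map_sub, map_add]
  ring

lemma abs_leibnizDefect_cosh_le (a : ℝ →+ ℝ) {K : ℝ}
    (hK : ∀ y ∈ Icc (0 : ℝ) 4, |coshDefect a y| ≤ K) :
    ∀ t ∈ Icc (cosh 1) (cosh 2), |leibnizDefect a t t| ≤ (K + 4 * cosh 2 * K + |a 1|) / 2 := by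
  intro t ht
  obtain ⟨x, ⟨hx₁, hx₂⟩, rfl⟩ :=
    intermediate_value_Icc (by norm_num) continuous_cosh.continuousOn ht
  have hcosh : |cosh x| ≤ cosh 2 := by
    rw [abs_of_pos (cosh_pos x), cosh_le_cosh, abs_of_nonneg (by linarith), abs_two]; exact hx₂
  have h₁ := hK x ⟨by linarith, by linarith⟩
  have h₂ := hK (2 * x) ⟨by linarith, by linarith⟩
  calc |leibnizDefect a (cosh x) (cosh x)|
      = |coshDefect a (2 * x) - 4 * cosh x * coshDefect a x + a 1| / 2 := by
        rw [← two_mul_leibnizDefect_cosh, abs_mul, abs_two]; ring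
    _ ≤ (|coshDefect a (2 * x)| + 4 * |cosh x| * |coshDefect a x| + |a 1|) / 2 := by
        gcongr
        refine (abs_add_le _ _).trans (add_le_add_left ((abs_sub _ _).trans ?_) _)
        rw [abs_mul, abs_mul, abs_of_pos (four_pos : (0 : ℝ) < 4)]
    _ ≤ (K + 4 * cosh 2 * K + |a 1|) / 2 := by
        have hK₀ : 0 ≤ K := (abs_nonneg _).trans h₁
        gcongr

theorem stmt_15 (ε : ℝ) (hε : 0 < ε) (f : ℝ → ℝ)
    (hf : ∀ x y : ℝ, |f (x + y) - f x - f y| ≤ ε)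
    (hlb : LocallyBoundedOn (fun x : ℝ => f (Real.cosh x) - Real.sinh x * f x) Set.univ) :
    ∃ (l : ℝ) (χ : ℝ → ℝ), IsRealDerivation χ ∧
      ∀ x : ℝ, |f x - (χ x + l * x)| ≤ ε := by
  obtain ⟨a, hfa⟩ := exists_addMonoidHom_norm_sub_le (f := f) hf
  obtain ⟨C, hC⟩ := hlb.exists_bound_of_isCompact (isCompact_Icc (a := 0) (b := 4)) (subset_univ _)
  have hK (y : ℝ) (hy : y ∈ Icc (0 : ℝ) 4) : |coshDefect a y| ≤ C + ε * (1 + sinh 4) := by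
    have hsinh : |sinh y| ≤ sinh 4 := by
      rw [abs_sinh, sinh_le_sinh, abs_of_nonneg hy.1]; exact hy.2
    have hf' : |coshDefect f y| ≤ C := hC y hy
    have hfa' : |coshDefect f y - coshDefect a y| ≤ ε * (1 + sinh 4) :=
      (abs_coshDefect_sub_le hfa y).trans (by gcongr)
    linarith [abs_sub_abs_le_abs_sub (coshDefect a y) (coshDefect f y),
      abs_sub_comm (coshDefect a y) (coshDefect f y)]
  have hcosh : cosh 1 < cosh 2 := by rw [cosh_lt_cosh]; norm_num
  refine ⟨a 1, _, leibnizDefect.isRealDerivation_sub hcosh (abs_leibnizDefect_cosh_le a hK),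
    fun x => ?_⟩
  simpa using hfa x
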